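/- arXiv:1708.08095 — 3 statements merged into one kernel-verified Lean document; each statement's English description precedes it below -/
import Mathlib

section
/- Let n be a positive integer, N = 2n, and let ε = (ε_1, ..., ε_N) be uniformly distributed on Ω = {ε ∈ {−1,1}^N : Σ_{i=1}^N ε_i = 0}, with expectation denoted E_S. Let a ∈ {0,1}^N be a vector with exactly ℓ coordinates equal to 1 (and the rest 0), where 1 ≤ ℓ ≤ n. Then for every real p ≥ 2, E_S |Σ_{i=1}^N a_i ε_i|^p ≤ (2 p ℓ)^{p/2}. -/
/-- The set `Ω = {ε ∈ {-1,1}^N : ∑ ε_i = 0}`. -/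
def Omega (N : ℕ) : Finset (Fin N → ℤ) :=
  (Fintype.piFinset fun _ : Fin N => ({-1, 1} : Finset ℤ)).filter fun ε => ∑ i, ε i = 0

/-- Expectation with respect to the uniform distribution on `Ω`. -/
noncomputable def ES (N : ℕ) (g : (Fin N → ℤ) → ℝ) : ℝ :=
  (∑ ε ∈ Omega N, g ε) / ((Omega N).card : ℝ)

/-!
Write `S_B = ∑_{b ∈ B} ε_b`. For `j ∉ B`, expanding `(S_B + ε_j)^{2k}` binomially and using
`ε_j^2 = 1` leaves even powers of `S_B`, controlled by induction on `B`, and terms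
`E[S_B^m ε_j]` with `m` odd. These are nonpositive: by exchangeability every coordinate outside
`B` has the same correlation with `S_B^m`, and those coordinates sum to `-S_B`, so
`|Bᶜ| E[S_B^m ε_j] = -E[S_B^{m+1}] ≤ 0`. Hence `E S_B^{2k} ≤ (2k-1)‼ |B|^k ≤ (2k|B|)^k`, and
for real `p ≥ 2` the power-mean inequality with `k = ⌈p/2⌉ ≤ p` gives the bound.
-/

open Nat Finset

namespace Nat

theorem two_pow_mul_factorial_mul_doubleFactorial (k : ℕ) :
    2 ^ k * k ! * (2 * k - 1)‼ = (2 * k)! := by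
  cases k with
  | zero => rfl
  | succ j =>
    rw [show 2 * (j + 1) - 1 = 2 * j + 1 by omega, ← doubleFactorial_two_mul,
      show 2 * (j + 1) = 2 * j + 1 + 1 by ring, factorial_eq_mul_doubleFactorial]

theorem choose_two_mul_mul_doubleFactorial {k r : ℕ} (h : r ≤ k) :
    (2 * k).choose (2 * r) * (2 * r - 1)‼ * (2 * (k - r) - 1)‼ = (2 * k - 1)‼ * k.choose r := by
  have hpos : 0 < 2 ^ k * (r ! * (k - r)!) := by positivity
  apply Nat.eq_of_mul_eq_mul_right hpos
  calc (2 * k).choose (2 * r) * (2 * r - 1)‼ * (2 * (k - r) - 1)‼ * (2 ^ k * (r ! * (k - r)!))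
      = (2 * k).choose (2 * r) * ((2 ^ r * r ! * (2 * r - 1)‼) *
          (2 ^ (k - r) * (k - r)! * (2 * (k - r) - 1)‼)) := by
        rw [show 2 ^ k = 2 ^ r * 2 ^ (k - r) by rw [← pow_add, Nat.add_sub_cancel' h]]; ring
    _ = (2 * k).choose (2 * r) * ((2 * r)! * (2 * k - 2 * r)!) := by
        rw [two_pow_mul_factorial_mul_doubleFactorial, two_pow_mul_factorial_mul_doubleFactorial,
          Nat.mul_sub]
    _ = (2 * k)! := by rw [← mul_assoc, choose_mul_factorial_mul_factorial (by omega)]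
    _ = (2 * k - 1)‼ * k.choose r * (2 ^ k * (r ! * (k - r)!)) := by
        rw [← two_pow_mul_factorial_mul_doubleFactorial k, ← choose_mul_factorial_mul_factorial h]
        ring

theorem choose_two_mul_mul_doubleFactorial_le {k r : ℕ} (h : r ≤ k) :
    (2 * k).choose (2 * r) * (2 * r - 1)‼ ≤ (2 * k - 1)‼ * k.choose r :=
  choose_two_mul_mul_doubleFactorial h ▸ Nat.le_mul_of_pos_right _ (doubleFactorial_pos _)

theorem doubleFactorial_two_mul_sub_one_le (k : ℕ) : (2 * k - 1)‼ ≤ (2 * k) ^ k := by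
  induction k with
  | zero => rfl
  | succ k ih =>
    rw [show 2 * (k + 1) - 1 = 2 * k + 1 by omega, doubleFactorial_add_one, pow_succ']
    exact Nat.mul_le_mul (by omega) (ih.trans (Nat.pow_le_pow_left (by omega) k))

end Nat

theorem Finset.sum_range_two_mul_add_one {M : Type*} [AddCommMonoid M] (f : ℕ → M) (k : ℕ) :
    ∑ m ∈ range (2 * k + 1), f m
      = ∑ r ∈ range (k + 1), f (2 * r) + ∑ r ∈ range k, f (2 * r + 1) := by
  induction k with
  | zero => simp
  | succ k ih =>
    rw [show 2 * (k + 1) + 1 = 2 * k + 1 + 1 + 1 by ring, sum_range_succ _ (2 * k + 1 + 1),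
      sum_range_succ _ (2 * k + 1), ih, sum_range_succ (fun r => f (2 * r)) (k + 1),
      sum_range_succ (fun r => f (2 * r + 1)) k, show 2 * k + 1 + 1 = 2 * (k + 1) by ring]
    abel

theorem add_pow_two_mul_of_sq_eq_one {R : Type*} [CommSemiring R] {x : R} (hx : x ^ 2 = 1)
    (y : R) (k : ℕ) :
    (y + x) ^ (2 * k) = ∑ r ∈ range (k + 1), ((2 * k).choose (2 * r) : R) * y ^ (2 * r)
      + ∑ r ∈ range k, ((2 * k).choose (2 * r + 1) : R) * (y ^ (2 * r + 1) * x) := by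
  rw [add_pow, sum_range_two_mul_add_one]
  congr 1 <;> refine sum_congr rfl fun r hr => ?_
  · rw [show 2 * k - 2 * r = 2 * (k - r) by omega, pow_mul x, hx, one_pow, mul_one, mul_comm]
  · have : r < k := mem_range.1 hr
    rw [show 2 * k - (2 * r + 1) = 2 * (k - r - 1) + 1 by omega, pow_succ x, pow_mul x, hx,
      one_pow, one_mul]
    ring

section Omega

variable {N : ℕ}

theorem mem_Omega {ε : Fin N → ℤ} :
    ε ∈ Omega N ↔ (∀ i, ε i = -1 ∨ ε i = 1) ∧ ∑ i, ε i = 0 := by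
  simp [Omega, Fintype.mem_piFinset]

theorem sq_apply_of_mem_Omega {ε : Fin N → ℤ} (hε : ε ∈ Omega N) (i : Fin N) :
    (ε i : ℝ) ^ 2 = 1 := by
  rcases (mem_Omega.1 hε).1 i with h | h <;> simp [h]

theorem sum_apply_of_mem_Omega {ε : Fin N → ℤ} (hε : ε ∈ Omega N) : ∑ i, (ε i : ℝ) = 0 :=
  mod_cast (mem_Omega.1 hε).2

theorem comp_swap_mem_Omega {ε : Fin N → ℤ} (hε : ε ∈ Omega N) (i j : Fin N) :
    ε ∘ Equiv.swap i j ∈ Omega N := by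
  rw [mem_Omega] at hε ⊢
  exact ⟨fun _ => hε.1 _, (Equiv.sum_comp _ ε).trans hε.2⟩

theorem sum_Omega_mul_apply_eq_of_swap_invariant {i j : Fin N} {g : (Fin N → ℤ) → ℝ}
    (hg : ∀ ε, g (ε ∘ Equiv.swap i j) = g ε) :
    ∑ ε ∈ Omega N, g ε * ε i = ∑ ε ∈ Omega N, g ε * ε j := by
  refine sum_nbij' (· ∘ Equiv.swap i j) (· ∘ Equiv.swap i j)
    (fun ε hε => comp_swap_mem_Omega hε i j) (fun ε hε => comp_swap_mem_Omega hε i j)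
    (fun ε _ => by ext; simp) (fun ε _ => by ext; simp) fun ε _ => ?_
  simp [hg]

theorem card_compl_mul_sum_Omega_mul_apply {B : Finset (Fin N)} {j : Fin N} (hj : j ∉ B)
    {g : (Fin N → ℤ) → ℝ} (hg : ∀ ε ε' : Fin N → ℤ, (∀ b ∈ B, ε b = ε' b) → g ε = g ε') :
    (Bᶜ.card : ℝ) * ∑ ε ∈ Omega N, g ε * ε j = -∑ ε ∈ Omega N, g ε * ∑ b ∈ B, (ε b : ℝ) := by
  have swap_invariant (i : Fin N) (hi : i ∉ B) (ε : Fin N → ℤ) : g (ε ∘ Equiv.swap i j) = g ε :=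
    hg _ _ fun b hb => by
      rw [Function.comp_apply, Equiv.swap_apply_of_ne_of_ne (ne_of_mem_of_not_mem hb hi)
        (ne_of_mem_of_not_mem hb hj)]
  calc (Bᶜ.card : ℝ) * ∑ ε ∈ Omega N, g ε * ε j
      = ∑ i ∈ Bᶜ, ∑ ε ∈ Omega N, g ε * ε i := by
        rw [← nsmul_eq_mul, ← sum_const]
        exact sum_congr rfl fun i hi =>
          (sum_Omega_mul_apply_eq_of_swap_invariant (swap_invariant i (mem_compl.1 hi))).symm
    _ = ∑ ε ∈ Omega N, g ε * ∑ i ∈ Bᶜ, (ε i : ℝ) := by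
        rw [sum_comm]; simp only [mul_sum]
    _ = -∑ ε ∈ Omega N, g ε * ∑ b ∈ B, (ε b : ℝ) := by
        rw [← sum_neg_distrib]
        refine sum_congr rfl fun ε hε => ?_
        have := sum_add_sum_compl B fun i => (ε i : ℝ)
        rw [sum_apply_of_mem_Omega hε] at this
        rw [eq_neg_of_add_eq_zero_right this, mul_neg]

theorem sum_Omega_sum_pow_mul_apply_nonpos {B : Finset (Fin N)} {j : Fin N} (hj : j ∉ B)
    {m : ℕ} (hm : Odd m) :
    ∑ ε ∈ Omega N, (∑ b ∈ B, (ε b : ℝ)) ^ m * ε j ≤ 0 := by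
  have hcorr := card_compl_mul_sum_Omega_mul_apply hj (g := fun ε => (∑ b ∈ B, (ε b : ℝ)) ^ m)
    fun ε ε' h => by rw [sum_congr rfl fun b hb => by rw [h b hb]]
  have heven : 0 ≤ ∑ ε ∈ Omega N, (∑ b ∈ B, (ε b : ℝ)) ^ m * ∑ b ∈ B, (ε b : ℝ) :=
    sum_nonneg fun ε _ => by rw [← pow_succ]; exact hm.add_one.pow_nonneg _
  have hcard : (0 : ℝ) < Bᶜ.card := by exact_mod_cast card_pos.2 ⟨j, mem_compl.2 hj⟩
  nlinarith

theorem sum_Omega_sum_pow_two_mul_le (B : Finset (Fin N)) (k : ℕ) :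
    ∑ ε ∈ Omega N, (∑ b ∈ B, (ε b : ℝ)) ^ (2 * k)
      ≤ (2 * k - 1)‼ * (B.card : ℝ) ^ k * (Omega N).card := by
  induction B using Finset.cons_induction generalizing k with
  | empty => cases k <;> simp
  | cons j B hj ih =>
    set S : (Fin N → ℤ) → ℝ := fun ε => ∑ b ∈ B, (ε b : ℝ)
    have expand (ε) (hε : ε ∈ Omega N) : (∑ b ∈ cons j B hj, (ε b : ℝ)) ^ (2 * k)
        = ∑ r ∈ range (k + 1), ((2 * k).choose (2 * r) : ℝ) * S ε ^ (2 * r)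
          + ∑ r ∈ range k, ((2 * k).choose (2 * r + 1) : ℝ) * (S ε ^ (2 * r + 1) * ε j) := by
      rw [sum_cons, add_comm]
      exact add_pow_two_mul_of_sq_eq_one (sq_apply_of_mem_Omega hε j) _ k
    calc ∑ ε ∈ Omega N, (∑ b ∈ cons j B hj, (ε b : ℝ)) ^ (2 * k)
        = ∑ r ∈ range (k + 1), ((2 * k).choose (2 * r) : ℝ) * ∑ ε ∈ Omega N, S ε ^ (2 * r)
          + ∑ r ∈ range k, ((2 * k).choose (2 * r + 1) : ℝ)
            * ∑ ε ∈ Omega N, S ε ^ (2 * r + 1) * ε j := by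
          rw [sum_congr rfl expand, sum_add_distrib, sum_comm, sum_comm (s := Omega N)]
          simp only [mul_sum]
      _ ≤ ∑ r ∈ range (k + 1), ((2 * k).choose (2 * r) : ℝ)
            * ((2 * r - 1)‼ * (B.card : ℝ) ^ r * (Omega N).card) + 0 := by
          gcongr with r
          · exact ih r
          · exact sum_nonpos fun r _ => mul_nonpos_of_nonneg_of_nonpos (by positivity)
              (sum_Omega_sum_pow_mul_apply_nonpos hj (odd_two_mul_add_one r))
      _ ≤ ∑ r ∈ range (k + 1),
            (2 * k - 1)‼ * (k.choose r : ℝ) * ((B.card : ℝ) ^ r * (Omega N).card) := by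
          rw [add_zero]
          refine sum_le_sum fun r hr => ?_
          have hcomb : ((2 * k).choose (2 * r) : ℝ) * (2 * r - 1)‼ ≤ (2 * k - 1)‼ * k.choose r :=
            mod_cast choose_two_mul_mul_doubleFactorial_le (Nat.lt_succ_iff.1 (mem_range.1 hr))
          calc _ = ((2 * k).choose (2 * r) * (2 * r - 1)‼ : ℝ)
                * ((B.card : ℝ) ^ r * (Omega N).card) := by ring
            _ ≤ _ := by gcongr
      _ = (2 * k - 1)‼ * ((cons j B hj).card : ℝ) ^ k * (Omega N).card := by
          rw [card_cons, Nat.cast_succ, add_pow, mul_sum, sum_mul]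
          refine sum_congr rfl fun r _ => ?_
          ring

theorem ES_nonneg {g : (Fin N → ℤ) → ℝ} (hg : ∀ ε, 0 ≤ g ε) : 0 ≤ ES N g :=
  div_nonneg (sum_nonneg fun ε _ => hg ε) (Nat.cast_nonneg _)

theorem ES_sum_pow_two_mul_le (B : Finset (Fin N)) (k : ℕ) :
    ES N (fun ε => (∑ b ∈ B, (ε b : ℝ)) ^ (2 * k)) ≤ (2 * k * B.card : ℝ) ^ k := by
  rcases (Omega N).eq_empty_or_nonempty with h | h
  · rw [ES, h, card_empty, Nat.cast_zero, div_zero]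
    positivity
  rw [ES, div_le_iff₀ (by exact_mod_cast h.card_pos)]
  refine (sum_Omega_sum_pow_two_mul_le B k).trans ?_
  rw [mul_pow]
  gcongr
  exact_mod_cast doubleFactorial_two_mul_sub_one_le k

theorem ES_le_rpow_ES_rpow {g : (Fin N → ℤ) → ℝ} (hg : ∀ ε, 0 ≤ g ε) {q : ℝ} (hq : 1 ≤ q) :
    ES N g ≤ ES N (fun ε => g ε ^ q) ^ (1 / q) := by
  rcases (Omega N).eq_empty_or_nonempty with h | h
  · rw [ES, h, card_empty, Nat.cast_zero, div_zero]
    exact Real.rpow_nonneg (ES_nonneg fun ε => Real.rpow_nonneg (hg ε) q) _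
  have hcard : (0 : ℝ) < (Omega N).card := by exact_mod_cast h.card_pos
  have hES (f : (Fin N → ℤ) → ℝ) : ES N f = ∑ ε ∈ Omega N, ((Omega N).card : ℝ)⁻¹ * f ε := by
    rw [ES, ← mul_sum, div_eq_inv_mul]
  rw [hES, hES]
  refine Real.arith_mean_le_rpow_mean _ _ _ (fun _ _ => by positivity) ?_ (fun ε _ => hg ε) hq
  rw [sum_const, nsmul_eq_mul, mul_inv_cancel₀ hcard.ne']

theorem ES_abs_rpow_le (X : (Fin N → ℤ) → ℝ) {p : ℝ} (hp : 0 < p) {k : ℕ} (hpk : p ≤ 2 * k) :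
    ES N (fun ε => |X ε| ^ p) ≤ ES N (fun ε => X ε ^ (2 * k)) ^ (p / (2 * k)) := by
  have hq : 1 ≤ 2 * k / p := (one_le_div hp).2 hpk
  have hpow (ε) : (|X ε| ^ p) ^ (2 * k / p) = X ε ^ (2 * k) := by
    rw [← Real.rpow_mul (abs_nonneg _), mul_div_cancel₀ _ hp.ne', ← Nat.cast_ofNat,
      ← Nat.cast_mul, Real.rpow_natCast, (even_two_mul k).pow_abs]
  have := ES_le_rpow_ES_rpow (N := N) (fun ε => Real.rpow_nonneg (abs_nonneg (X ε)) p) hq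
  simpa only [hpow, one_div_div] using this

end Omega

theorem stmt7_general (n ℓ : ℕ) (a : Fin (2 * n) → ℝ)
    (ha : ∀ i, a i = 0 ∨ a i = 1)
    (hcard : (Finset.univ.filter fun i => a i = 1).card = ℓ)
    (p : ℝ) (hp : 2 ≤ p) :
    (ES (2 * n) fun ε => |∑ i, a i * (ε i : ℝ)| ^ p) ≤ (2 * p * ℓ) ^ (p / 2) := by
  have hsum (ε : Fin (2 * n) → ℤ) :
      ∑ i, a i * (ε i : ℝ) = ∑ b ∈ univ.filter fun i => a i = 1, (ε b : ℝ) := by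
    rw [sum_filter]
    refine sum_congr rfl fun i _ => ?_
    rcases ha i with h | h <;> simp [h]
  set k := ⌈p / 2⌉₊
  have hpk : p ≤ 2 * k := by linarith [Nat.le_ceil (p / 2)]
  have hkp : (k : ℝ) ≤ p := by linarith [Nat.ceil_lt_add_one (show 0 ≤ p / 2 by linarith)]
  simp only [hsum]
  calc _ ≤ ES (2 * n) (fun ε => (∑ b ∈ univ.filter fun i => a i = 1, (ε b : ℝ)) ^ (2 * k))
          ^ (p / (2 * k)) := ES_abs_rpow_le _ (by linarith) hpk
    _ ≤ ((2 * k * ℓ : ℝ) ^ k) ^ (p / (2 * k)) := by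
        refine Real.rpow_le_rpow (ES_nonneg fun ε => (even_two_mul k).pow_nonneg _) ?_
          (by positivity)
        exact hcard ▸ ES_sum_pow_two_mul_le _ k
    _ = (2 * k * ℓ) ^ (p / 2) := by
        rw [← Real.rpow_natCast, ← Real.rpow_mul (by positivity)]
        have hk : (k : ℝ) ≠ 0 := (by linarith : (0 : ℝ) < k).ne'
        congr 1
        field_simp
    _ ≤ (2 * p * ℓ) ^ (p / 2) := by gcongr

theorem stmt7 (n ℓ : ℕ) (h1 : 1 ≤ ℓ) (h2 : ℓ ≤ n) (a : Fin (2 * n) → ℝ)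
    (ha : ∀ i, a i = 0 ∨ a i = 1)
    (hcard : (Finset.univ.filter fun i => a i = 1).card = ℓ)
    (p : ℝ) (hp : 2 ≤ p) :
    (ES (2 * n) fun ε => |∑ i, a i * (ε i : ℝ)| ^ p) ≤ (2 * p * ℓ) ^ (p / 2) :=
  stmt7_general n ℓ a ha hcard p hp
end

section
/- Let n be a positive integer and 1 ≤ ℓ ≤ n. Let ξ be a hypergeometric random variable with parameters (2n, n, ℓ). Then for every real p ≥ 2, E |ξ − E ξ|^p ≤ 2 · (p ℓ / 4)^{p/2}. -/
/-- The probability that a hypergeometric random variable with parameters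
`(N, n, ℓ)` takes the value `k`: `C(ℓ,k) C(N-ℓ, n-k) / C(N, n)`. -/
noncomputable def hgP (N n ℓ k : ℕ) : ℝ :=
  ((ℓ.choose k : ℝ) * ((N - ℓ).choose (n - k) : ℝ)) / ((N.choose n : ℝ))

/-- The mean of a hypergeometric random variable with parameters `(N, n, ℓ)`. -/
noncomputable def hgMean (N n ℓ : ℕ) : ℝ :=
  ∑ k ∈ Finset.range (ℓ + 1), (k : ℝ) * hgP N n ℓ k

/-- The `p`-th absolute central moment `E |ξ - E ξ|^p` of a hypergeometric random
variable `ξ` with parameters `(N, n, ℓ)`. -/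
noncomputable def hgCentralMoment (N n ℓ : ℕ) (p : ℝ) : ℝ :=
  ∑ k ∈ Finset.range (ℓ + 1), |(k : ℝ) - hgMean N n ℓ| ^ p * hgP N n ℓ k

/-!
The hypergeometric law with parameters `(2n, n, ℓ)` is symmetric about `ℓ / 2`, and its weights are
at most twice those of the binomial law `Bin(ℓ, 1/2)`: this reduces to `2^ℓ C(2n-ℓ, ⌊(2n-ℓ)/2⌋) ≤
2 C(2n, n)`, which follows from the monotonicity of `m ↦ m (C(2m, m) / 4^m)²`. For the binomial law
the centred moment generating function is `cosh (t/2)^ℓ ≤ exp (t²ℓ/8)`. Bounding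
`|x|^p ≤ (p / (e t))^p (e^{tx} + e^{-tx})` and taking `t² = 4p/ℓ` gives
`E |ξ - ℓ/2|^p ≤ 4 (pℓ/4)^{p/2} e^{-p/2}`, and `e^{-p/2} ≤ 1/2` for `p ≥ 2`.
-/

open Finset Real

namespace Nat

/-- The ratio of consecutive values of `m ↦ m (C(2m, m) / 4^m)²` is `(2m+1)² / (4m(m+1)) ≥ 1`. -/
theorem mul_sq_four_pow_sub_mul_centralBinom_le {s n : ℕ} (h : s ≤ n) :
    s * (4 ^ (n - s) * centralBinom s) ^ 2 ≤ n * centralBinom n ^ 2 := by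
  induction n, h using Nat.le_induction with
  | base => simp
  | succ n hsn ih =>
    refine Nat.le_of_mul_le_mul_left ?_ n.succ_pos
    calc (n + 1) * (s * (4 ^ (n + 1 - s) * centralBinom s) ^ 2)
        = 16 * (n + 1) * (s * (4 ^ (n - s) * centralBinom s) ^ 2) := by
          rw [Nat.sub_add_comm hsn, pow_succ]; ring
      _ ≤ 16 * (n + 1) * (n * centralBinom n ^ 2) := Nat.mul_le_mul_left _ ih
      _ ≤ (2 * (2 * n + 1) * centralBinom n) ^ 2 := by nlinarith [sq_nonneg (centralBinom n)]
      _ = (n + 1) * ((n + 1) * centralBinom (n + 1) ^ 2) := by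
          rw [← succ_mul_centralBinom_succ]; ring

theorem four_pow_sub_mul_centralBinom_le {s n : ℕ} (hsn : s ≤ n) (hns : n ≤ 2 * s) :
    4 ^ (n - s) * centralBinom s ≤ 2 * centralBinom n := by
  rcases s.eq_zero_or_pos with rfl | hs
  · obtain rfl : n = 0 := by omega
    simp
  refine (Nat.pow_le_pow_iff_left two_ne_zero).mp (Nat.le_of_mul_le_mul_left ?_ hs)
  calc s * (4 ^ (n - s) * centralBinom s) ^ 2 ≤ n * centralBinom n ^ 2 :=
        mul_sq_four_pow_sub_mul_centralBinom_le hsn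
    _ ≤ 2 * s * centralBinom n ^ 2 := Nat.mul_le_mul_right _ hns
    _ ≤ s * (2 * centralBinom n) ^ 2 := by ring_nf; omega

theorem two_mul_choose_two_mul_add_one (s : ℕ) :
    2 * (2 * s + 1).choose s = centralBinom (s + 1) := by
  rw [centralBinom_eq_two_mul_choose, show 2 * (s + 1) = 2 * s + 1 + 1 by ring, choose_succ_succ,
    choose_symm_half]
  ring

theorem two_pow_mul_choose_half_le {ℓ n : ℕ} (h : ℓ ≤ n) :
    2 ^ ℓ * (2 * n - ℓ).choose ((2 * n - ℓ) / 2) ≤ 2 * centralBinom n := by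
  obtain ⟨a, rfl | rfl⟩ := ℓ.even_or_odd'
  · have hs := four_pow_sub_mul_centralBinom_le (s := n - a) (n := n) (by omega) (by omega)
    rw [show n - (n - a) = a by omega, centralBinom_eq_two_mul_choose,
      show 2 * (n - a) = 2 * n - 2 * a by omega] at hs
    rwa [show (2 * n - 2 * a) / 2 = n - a by omega, pow_mul, show 2 ^ 2 = 4 from rfl]
  · have hs := four_pow_sub_mul_centralBinom_le (s := n - a) (n := n) (by omega) (by omega)
    rw [show n - (n - a) = a by omega, show n - a = n - a - 1 + 1 by omega,
      ← two_mul_choose_two_mul_add_one] at hs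
    rwa [show 2 * n - (2 * a + 1) = 2 * (n - a - 1) + 1 by omega,
      show (2 * (n - a - 1) + 1) / 2 = n - a - 1 by omega, pow_succ, pow_mul,
      show 2 ^ 2 = 4 from rfl, mul_assoc]

end Nat

lemma hgP_nonneg (N n ℓ k : ℕ) : 0 ≤ hgP N n ℓ k := by
  unfold hgP; positivity

lemma sum_range_hgP {N n ℓ : ℕ} (hℓn : ℓ ≤ n) (hnN : n ≤ N) :
    ∑ k ∈ range (ℓ + 1), hgP N n ℓ k = 1 := by
  have hvandermonde :
      ∑ k ∈ range (ℓ + 1), ℓ.choose k * (N - ℓ).choose (n - k) = N.choose n := by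
    rw [← Nat.add_sub_of_le (hℓn.trans hnN), Nat.add_choose_eq,
      Nat.sum_antidiagonal_eq_sum_range_succ_mk, Nat.add_sub_cancel_left]
    refine sum_subset (range_subset_range.2 (by omega)) fun k _ hk => ?_
    rw [Nat.choose_eq_zero_of_lt (by simpa using hk), zero_mul]
  have hN : (N.choose n : ℝ) ≠ 0 := by exact_mod_cast (Nat.choose_pos hnN).ne'
  simp only [hgP, ← sum_div, div_eq_one_iff_eq hN]
  exact_mod_cast hvandermonde

lemma hgP_two_mul_sub {n ℓ k : ℕ} (hk : k ≤ ℓ) (hℓ : ℓ ≤ n) :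
    hgP (2 * n) n ℓ (ℓ - k) = hgP (2 * n) n ℓ k := by
  unfold hgP
  rw [Nat.choose_symm hk, show n - (ℓ - k) = 2 * n - ℓ - (n - k) by omega,
    Nat.choose_symm (by omega)]

lemma hgMean_two_mul {n ℓ : ℕ} (hℓ : ℓ ≤ n) : hgMean (2 * n) n ℓ = ℓ / 2 := by
  have hreflect :
      hgMean (2 * n) n ℓ = ∑ k ∈ range (ℓ + 1), ((ℓ : ℝ) - k) * hgP (2 * n) n ℓ k := by
    rw [hgMean, ← sum_range_reflect]
    refine sum_congr rfl fun k hk => ?_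
    have hkℓ : k ≤ ℓ := Nat.lt_succ_iff.mp (mem_range.mp hk)
    rw [Nat.add_sub_cancel, hgP_two_mul_sub hkℓ hℓ, Nat.cast_sub hkℓ]
  have htwice : 2 * hgMean (2 * n) n ℓ = ℓ :=
    calc 2 * hgMean (2 * n) n ℓ
        = ∑ k ∈ range (ℓ + 1), ((k : ℝ) * hgP (2 * n) n ℓ k + (ℓ - k) * hgP (2 * n) n ℓ k) := by
          rw [two_mul, sum_add_distrib, ← hreflect, hgMean]
      _ = ℓ * ∑ k ∈ range (ℓ + 1), hgP (2 * n) n ℓ k := by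
          rw [mul_sum]; exact sum_congr rfl fun k _ => by ring
      _ = ℓ := by rw [sum_range_hgP hℓ (by omega), mul_one]
  linarith

lemma hgP_two_mul_le {n ℓ : ℕ} (hℓ : ℓ ≤ n) (k : ℕ) :
    hgP (2 * n) n ℓ k ≤ 2 * ((ℓ.choose k : ℝ) / 2 ^ ℓ) := by
  have hnat : ℓ.choose k * (2 * n - ℓ).choose (n - k) * 2 ^ ℓ
      ≤ 2 * ℓ.choose k * (2 * n).choose n :=
    calc ℓ.choose k * (2 * n - ℓ).choose (n - k) * 2 ^ ℓ
        = ℓ.choose k * (2 ^ ℓ * (2 * n - ℓ).choose (n - k)) := by ring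
      _ ≤ ℓ.choose k * (2 ^ ℓ * (2 * n - ℓ).choose ((2 * n - ℓ) / 2)) := by
          gcongr; exact Nat.choose_le_middle _ _
      _ ≤ ℓ.choose k * (2 * Nat.centralBinom n) :=
          Nat.mul_le_mul_left _ (Nat.two_pow_mul_choose_half_le hℓ)
      _ = 2 * ℓ.choose k * (2 * n).choose n := by rw [Nat.centralBinom_eq_two_mul_choose]; ring
  have hcb : (0 : ℝ) < (2 * n).choose n := by exact_mod_cast Nat.choose_pos (by omega)
  rw [hgP, div_le_iff₀ hcb, ← mul_div_assoc, div_mul_eq_mul_div, le_div_iff₀ (by positivity)]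
  exact_mod_cast hnat

lemma sum_choose_div_two_pow_mul_exp_eq_cosh_pow (ℓ : ℕ) (t : ℝ) :
    ∑ k ∈ range (ℓ + 1), (ℓ.choose k : ℝ) / 2 ^ ℓ * exp (t * (k - ℓ / 2)) = cosh (t / 2) ^ ℓ := by
  have hcosh : cosh (t / 2) = exp (-(t / 2)) / 2 * (exp t + 1) := by
    rw [cosh_eq, mul_add, div_mul_eq_mul_div, ← exp_add]; ring_nf
  rw [hcosh, mul_pow, add_pow, mul_sum]
  refine sum_congr rfl fun k _ => ?_
  rw [one_pow, mul_one, div_pow, ← exp_nat_mul, ← exp_nat_mul,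
    show t * (k - ℓ / 2) = ℓ * -(t / 2) + k * t by ring, exp_add]
  ring

lemma sum_choose_div_two_pow_mul_exp_le (ℓ : ℕ) (t : ℝ) :
    ∑ k ∈ range (ℓ + 1), (ℓ.choose k : ℝ) / 2 ^ ℓ * exp (t * (k - ℓ / 2))
      ≤ exp (t ^ 2 * ℓ / 8) := by
  rw [sum_choose_div_two_pow_mul_exp_eq_cosh_pow,
    show t ^ 2 * ℓ / 8 = ℓ * ((t / 2) ^ 2 / 2) by ring, exp_nat_mul]
  exact pow_le_pow_left₀ (cosh_pos _).le (cosh_le_exp_half_sq _) ℓ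

lemma rpow_le_mul_exp_mul {p t y : ℝ} (hp : 0 < p) (ht : 0 < t) (hy : 0 ≤ y) :
    y ^ p ≤ (p / (exp 1 * t)) ^ p * exp (t * y) := by
  have hu : exp 1 * (t * y / p) ≤ exp (t * y / p) := by
    rw [show exp (t * y / p) = exp 1 * exp (t * y / p - 1) by rw [← exp_add]; ring_nf]
    gcongr
    linarith [add_one_le_exp (t * y / p - 1)]
  calc y ^ p = (p / (exp 1 * t) * (exp 1 * (t * y / p))) ^ p := by congr 1; field_simp
    _ = (p / (exp 1 * t)) ^ p * (exp 1 * (t * y / p)) ^ p :=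
        mul_rpow (by positivity) (by positivity)
    _ ≤ (p / (exp 1 * t)) ^ p * exp (t * y / p) ^ p := by gcongr
    _ = (p / (exp 1 * t)) ^ p * exp (t * y) := by rw [← exp_mul]; field_simp

lemma abs_rpow_le_mul_exp_add_exp {p t : ℝ} (hp : 0 < p) (ht : 0 < t) (x : ℝ) :
    |x| ^ p ≤ (p / (exp 1 * t)) ^ p * (exp (t * x) + exp (-t * x)) := by
  refine (rpow_le_mul_exp_mul hp ht (abs_nonneg x)).trans ?_
  gcongr
  simpa [abs_mul, abs_of_pos ht] using exp_abs_le (t * x)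

lemma hgCentralMoment_two_mul_le {n ℓ : ℕ} (hℓ : ℓ ≤ n) {p t : ℝ} (hp : 0 < p) (ht : 0 < t) :
    hgCentralMoment (2 * n) n ℓ p ≤ 4 * (p / (exp 1 * t)) ^ p * exp (t ^ 2 * ℓ / 8) := by
  set C := (p / (exp 1 * t)) ^ p
  set M : ℝ → ℝ := fun s ↦ ∑ k ∈ range (ℓ + 1), (ℓ.choose k : ℝ) / 2 ^ ℓ * exp (s * (k - ℓ / 2))
  calc hgCentralMoment (2 * n) n ℓ p
      ≤ ∑ k ∈ range (ℓ + 1),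
          C * (exp (t * (k - ℓ / 2)) + exp (-t * (k - ℓ / 2)))
            * (2 * ((ℓ.choose k : ℝ) / 2 ^ ℓ)) := by
        rw [hgCentralMoment, hgMean_two_mul hℓ]
        gcongr with k
        · exact hgP_nonneg _ _ _ _
        · exact abs_rpow_le_mul_exp_add_exp hp ht _
        · exact hgP_two_mul_le hℓ k
    _ = 2 * C * (M t + M (-t)) := by
        simp only [M, mul_sum, ← sum_add_distrib]
        exact sum_congr rfl fun k _ ↦ by ring
    _ ≤ 2 * C * (exp (t ^ 2 * ℓ / 8) + exp ((-t) ^ 2 * ℓ / 8)) := by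
        gcongr <;> exact sum_choose_div_two_pow_mul_exp_le ℓ _
    _ = 4 * C * exp (t ^ 2 * ℓ / 8) := by rw [neg_sq]; ring

lemma hgCentralMoment_two_mul_le_mul_exp {n ℓ : ℕ} (hℓ0 : 0 < ℓ) (hℓ : ℓ ≤ n) {p : ℝ}
    (hp : 0 < p) : hgCentralMoment (2 * n) n ℓ p ≤ 4 * (p * ℓ / 4) ^ (p / 2) * exp (-(p / 2)) := by
  have hℓpos : (0 : ℝ) < ℓ := by exact_mod_cast hℓ0
  obtain ⟨t, ht, hts⟩ : ∃ t : ℝ, 0 < t ∧ t ^ 2 = 4 * p / ℓ :=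
    ⟨√(4 * p / ℓ), by positivity, sq_sqrt (by positivity)⟩
  have hsq : (p / (exp 1 * t)) ^ (2 : ℝ) = p * ℓ / 4 * exp (-2) := by
    rw [rpow_two, div_pow, mul_pow, hts, exp_neg, show exp 2 = exp 1 ^ 2 by
      rw [← exp_nat_mul]; norm_num]
    field_simp
  calc hgCentralMoment (2 * n) n ℓ p ≤ 4 * (p / (exp 1 * t)) ^ p * exp (t ^ 2 * ℓ / 8) :=
        hgCentralMoment_two_mul_le hℓ hp ht
    _ = 4 * ((p / (exp 1 * t)) ^ (2 : ℝ)) ^ (p / 2) * exp (p / 2) := by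
        rw [← rpow_mul (by positivity), hts]; field_simp; ring_nf
    _ = 4 * (p * ℓ / 4) ^ (p / 2) * exp (-(p / 2)) := by
        rw [hsq, mul_rpow (by positivity) (exp_pos _).le, ← exp_mul, mul_assoc, mul_assoc,
          ← exp_add]
        ring_nf

theorem stmt13 (n ℓ : ℕ) (h1 : 1 ≤ ℓ) (h2 : ℓ ≤ n) (p : ℝ) (hp : 2 ≤ p) :
    hgCentralMoment (2 * n) n ℓ p ≤ 2 * (p * ℓ / 4) ^ (p / 2) := by
  have hexp : exp (-(p / 2)) ≤ 1 / 2 :=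
    calc exp (-(p / 2)) ≤ exp (-1) := exp_le_exp.2 (by linarith)
      _ ≤ 1 / 2 := by
        rw [exp_neg, inv_le_comm₀ (exp_pos 1) (by norm_num)]
        linarith [add_one_le_exp 1]
  calc hgCentralMoment (2 * n) n ℓ p ≤ 4 * (p * ℓ / 4) ^ (p / 2) * exp (-(p / 2)) :=
        hgCentralMoment_two_mul_le_mul_exp h1 h2 (by linarith)
    _ ≤ 4 * (p * ℓ / 4) ^ (p / 2) * (1 / 2) := by gcongr
    _ = 2 * (p * ℓ / 4) ^ (p / 2) := by ring
end

section
/- Let N be a positive integer, a, b ∈ ℝ^N, and let Π_N be the group of permutations of {1, ..., N} equipped with the uniform probability measure; expectation is denoted E. Define f(σ) = |Σ_{i=1}^N a_{σ(i)} b_i|. Then for every real p ≥ 2, (E |f|^p)^{1/p} ≤ E |f| + 4 √p · √N · ‖a‖_∞ ‖b‖_∞ ≤ (E |f|²)^{1/2} + 4 √p · √N · ‖a‖_∞ ‖b‖_∞. -/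
/-!
Write `S σ = ∑ i, a (σ i) * b i` and `μ = (∑ a) (∑ b) / N`. The pairs `(σ, σ * swap i j)` are
exchangeable, and the centred statistic `T = S - μ` satisfies Stein's linearity condition
`∑ i j, (T σ - T (σ * swap i j)) = 2 N T σ`, while each increment is bounded by `4 ‖a‖ ‖b‖`.
The method of exchangeable pairs then gives the moment recursion
`E T ^ (2k+2) ≤ (2k+1) 8 N ‖a‖² ‖b‖² E T ^ (2k)`, so `‖T‖_{2k} ≤ √(16 k N) ‖a‖ ‖b‖`, and the same
condition gives `E S = μ`. With `2k = 2⌈p/2⌉ ∈ [p, 2p]`, Lyapunov's and Minkowski's inequalities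
and `|μ| ≤ E |S|` yield the first inequality; the second is `E |S| ≤ (E S²)^(1/2)`.
-/

/-- Expectation with respect to the uniform probability measure on the permutation
group `Π_N` of `{1, ..., N}`. -/
noncomputable def EPi (N : ℕ) (g : Equiv.Perm (Fin N) → ℝ) : ℝ :=
  (∑ σ : Equiv.Perm (Fin N), g σ) / (Fintype.card (Equiv.Perm (Fin N)) : ℝ)

open Finset
open scoped BigOperators

section Moments

variable {Ω : Type*} [Fintype Ω] [Nonempty Ω]

theorem expect_abs_add_rpow_rpow_le {p : ℝ} (hp : 1 ≤ p) (f g : Ω → ℝ) :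
    (𝔼 ω, |f ω + g ω| ^ p) ^ (1 / p) ≤
      (𝔼 ω, |f ω| ^ p) ^ (1 / p) + (𝔼 ω, |g ω| ^ p) ^ (1 / p) := by
  have hcard : (0 : ℝ) < Fintype.card Ω := by exact_mod_cast Fintype.card_pos
  have hsum (h : Ω → ℝ) : 0 ≤ ∑ ω, |h ω| ^ p := by positivity
  simp only [Fintype.expect_eq_sum_div_card, Real.div_rpow (hsum _) hcard.le, ← add_div]
  gcongr
  exact Real.Lp_add_le _ f g hp

theorem expect_abs_rpow_rpow_le_of_le {p q : ℝ} (hp : 0 < p) (hpq : p ≤ q) (f : Ω → ℝ) :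
    (𝔼 ω, |f ω| ^ p) ^ (1 / p) ≤ (𝔼 ω, |f ω| ^ q) ^ (1 / q) := by
  have hq : 0 < q := hp.trans_le hpq
  have hcard : (0 : ℝ) < Fintype.card Ω := by exact_mod_cast Fintype.card_pos
  have jensen : (𝔼 ω, |f ω| ^ p) ^ (q / p) ≤ 𝔼 ω, |f ω| ^ q := by
    have h := Real.rpow_arith_mean_le_arith_mean_rpow univ (fun _ => (Fintype.card Ω : ℝ)⁻¹)
      (fun ω => |f ω| ^ p) (fun _ _ => by positivity) (by simp [hcard.ne'])
      (fun _ _ => by positivity) ((one_le_div hp).mpr hpq)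
    simp only [inv_mul_eq_div, ← Finset.sum_div, ← Fintype.expect_eq_sum_div_card] at h
    convert h using 2 with ω
    rw [← Real.rpow_mul (abs_nonneg _), mul_div_cancel₀ _ hp.ne']
  calc (𝔼 ω, |f ω| ^ p) ^ (1 / p) = ((𝔼 ω, |f ω| ^ p) ^ (q / p)) ^ (1 / q) := by
        rw [← Real.rpow_mul (by positivity)]
        congr 1
        field_simp
    _ ≤ (𝔼 ω, |f ω| ^ q) ^ (1 / q) := by gcongr

theorem expect_abs_rpow_rpow_le_sqrt {T : Ω → ℝ} {C : ℝ} (hC : 0 ≤ C)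
    (hT : ∀ k : ℕ, 𝔼 ω, T ω ^ (2 * k) ≤ (2 * k * C) ^ k) {p : ℝ} (hp : 2 ≤ p) :
    (𝔼 ω, |T ω| ^ p) ^ (1 / p) ≤ √(2 * p * C) := by
  set k := ⌈p / 2⌉₊
  have hpk : p ≤ 2 * k := by linarith [Nat.le_ceil (p / 2)]
  have hkp : (k : ℝ) ≤ p := by linarith [Nat.ceil_lt_add_one (show 0 ≤ p / 2 by linarith)]
  have hk : (0 : ℝ) < k := by linarith
  have habs (ω : Ω) : |T ω| ^ ((2 * k : ℕ) : ℝ) = T ω ^ (2 * k) := by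
    rw [Real.rpow_natCast, (even_two_mul k).pow_abs]
  calc (𝔼 ω, |T ω| ^ p) ^ (1 / p)
      ≤ (𝔼 ω, |T ω| ^ ((2 * k : ℕ) : ℝ)) ^ (1 / ((2 * k : ℕ) : ℝ)) :=
        expect_abs_rpow_rpow_le_of_le (by linarith) (by push_cast; exact hpk) T
    _ ≤ ((2 * k * C) ^ k) ^ (1 / ((2 * k : ℕ) : ℝ)) := by
        simp only [habs]
        gcongr
        · exact expect_nonneg fun ω _ => (even_two_mul k).pow_nonneg _
        · exact hT k
    _ = √(2 * k * C) := by
        rw [Real.sqrt_eq_rpow, ← Real.rpow_natCast, ← Real.rpow_mul (by positivity)]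
        congr 1
        push_cast
        field_simp
    _ ≤ √(2 * p * C) := by gcongr

theorem expect_abs_rpow_rpow_le_expect_abs_add {p R : ℝ} (hp : 1 ≤ p) (f : Ω → ℝ)
    (h : (𝔼 ω, |f ω - 𝔼 ω', f ω'| ^ p) ^ (1 / p) ≤ R) :
    (𝔼 ω, |f ω| ^ p) ^ (1 / p) ≤ 𝔼 ω, |f ω| + R := by
  set m := 𝔼 ω, f ω
  calc (𝔼 ω, |f ω| ^ p) ^ (1 / p) = (𝔼 ω, |(f ω - m) + m| ^ p) ^ (1 / p) := by simp
    _ ≤ (𝔼 ω, |f ω - m| ^ p) ^ (1 / p) + (𝔼 _ω : Ω, |m| ^ p) ^ (1 / p) :=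
        expect_abs_add_rpow_rpow_le hp _ _
    _ = (𝔼 ω, |f ω - m| ^ p) ^ (1 / p) + |m| := by
        rw [Fintype.expect_const, one_div, Real.rpow_rpow_inv (abs_nonneg m) (by linarith)]
    _ ≤ 𝔼 ω, |f ω| + R := by linarith [abs_expect_le univ f]

theorem expect_abs_le_sqrt_expect_sq (f : Ω → ℝ) : 𝔼 ω, |f ω| ≤ √(𝔼 ω, |f ω| ^ 2) :=
  Real.le_sqrt_of_sq_le (by simpa using expect_mul_sq_le_sq_mul_sq univ (fun ω => |f ω|) 1)

end Moments

theorem mul_pow_le_pow_add_pow (x y : ℝ) {i j k : ℕ} (hijk : i + j = 2 * k) :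
    x ^ i * y ^ j ≤ x ^ (2 * k) + y ^ (2 * k) := by
  have hx : x ^ (2 * k) = |x| ^ (2 * k) := ((even_two_mul k).pow_abs x).symm
  have hy : y ^ (2 * k) = |y| ^ (2 * k) := ((even_two_mul k).pow_abs y).symm
  calc x ^ i * y ^ j ≤ |x| ^ i * |y| ^ j := by
        rw [← abs_pow, ← abs_pow, ← abs_mul]; exact le_abs_self _
    _ ≤ x ^ (2 * k) + y ^ (2 * k) := by
        rw [hx, hy, ← hijk]
        rcases le_total |x| |y| with h | h
        · calc |x| ^ i * |y| ^ j ≤ |y| ^ i * |y| ^ j := by gcongr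
            _ = |y| ^ (i + j) := (pow_add _ _ _).symm
            _ ≤ _ := le_add_of_nonneg_left (by positivity)
        · calc |x| ^ i * |y| ^ j ≤ |x| ^ i * |x| ^ j := by gcongr
            _ = |x| ^ (i + j) := (pow_add _ _ _).symm
            _ ≤ _ := le_add_of_nonneg_right (by positivity)

theorem sub_mul_pow_sub_pow_le (x y : ℝ) (k : ℕ) :
    (x - y) * (x ^ (2 * k + 1) - y ^ (2 * k + 1)) ≤
      (2 * k + 1) * ((x - y) ^ 2 * (x ^ (2 * k) + y ^ (2 * k))) := by
  have hsum : ∑ i ∈ range (2 * k + 1), x ^ i * y ^ (2 * k + 1 - 1 - i) ≤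
      (2 * k + 1) * (x ^ (2 * k) + y ^ (2 * k)) := by
    calc _ ≤ ∑ _i ∈ range (2 * k + 1), (x ^ (2 * k) + y ^ (2 * k)) := by
          refine sum_le_sum fun i hi => mul_pow_le_pow_add_pow x y ?_
          have := mem_range.mp hi
          omega
      _ = _ := by rw [sum_const, card_range, nsmul_eq_mul]; push_cast; ring
  calc (x - y) * (x ^ (2 * k + 1) - y ^ (2 * k + 1))
      = (x - y) ^ 2 * ∑ i ∈ range (2 * k + 1), x ^ i * y ^ (2 * k + 1 - 1 - i) := by
        rw [← geom_sum₂_mul]; ring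
    _ ≤ (x - y) ^ 2 * ((2 * k + 1) * (x ^ (2 * k) + y ^ (2 * k))) := by gcongr
    _ = _ := by ring

theorem le_pow_of_le_odd_mul {m : ℕ → ℝ} {C : ℝ} (hC : 0 ≤ C) (h0 : m 0 ≤ 1)
    (hm : ∀ k : ℕ, m (k + 1) ≤ (2 * k + 1) * C * m k) (k : ℕ) : m k ≤ (2 * k * C) ^ k := by
  induction k with
  | zero => simpa using h0
  | succ k ih =>
    calc m (k + 1) ≤ (2 * k + 1) * C * m k := hm k
      _ ≤ (2 * k + 1) * C * (2 * k * C) ^ k := by gcongr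
      _ ≤ (2 * (k + 1) * C) * (2 * (k + 1) * C) ^ k := by gcongr <;> linarith
      _ = _ := by push_cast; ring

section Exchangeable

variable {Ω κ : Type*} [Fintype Ω] [Fintype κ]

theorem Function.Involutive.sum_comp {M : Type*} [AddCommMonoid M] {π : Ω → Ω}
    (hπ : Function.Involutive π) (f : Ω → M) : ∑ ω, f (π ω) = ∑ ω, f ω :=
  Equiv.sum_comp hπ.toPerm f

theorem Function.Involutive.two_mul_sum_sub_mul {π : Ω → Ω} (hπ : Function.Involutive π)
    (f g : Ω → ℝ) :
    2 * ∑ ω, (f ω - f (π ω)) * g ω = ∑ ω, (f ω - f (π ω)) * (g ω - g (π ω)) := by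
  have hswap : ∑ ω, (f ω - f (π ω)) * g ω = ∑ ω, (f (π ω) - f ω) * g (π ω) := by
    conv_lhs => rw [← hπ.sum_comp]
    simp only [hπ _]
  rw [two_mul]
  nth_rewrite 2 [hswap]
  rw [← sum_add_distrib]
  exact sum_congr rfl fun ω _ => by ring

/- `hT` is Stein's linearity condition `E[T ω - T ω' | ω] = (lam / card κ) T ω` for the exchangeable
pair `(ω, ω')`, where `ω' = π j ω` with `j` uniform on `κ`. -/
variable (π : κ → Ω → Ω) (hπ : ∀ j, Function.Involutive (π j)) {T : Ω → ℝ} {lam : ℝ}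
  (hT : ∀ ω, ∑ j, (T ω - T (π j ω)) = lam * T ω)
include hπ hT

theorem sum_eq_zero_of_sum_sub_eq_mul (hlam : lam ≠ 0) : ∑ ω, T ω = 0 := by
  have h : lam * ∑ ω, T ω = 0 := by
    simp only [mul_sum, ← hT]
    rw [sum_comm]
    exact sum_eq_zero fun j _ => by rw [sum_sub_distrib, (hπ j).sum_comp T, sub_self]
  exact (mul_eq_zero.mp h).resolve_left hlam

theorem mul_sum_pow_add_two_le {M : ℝ} (hM : ∀ ω, ∑ j, (T ω - T (π j ω)) ^ 2 ≤ M) (k : ℕ) :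
    lam * ∑ ω, T ω ^ (2 * k + 2) ≤ (2 * k + 1) * M * ∑ ω, T ω ^ (2 * k) := by
  set D : κ → Ω → ℝ := fun j ω => T ω - T (π j ω)
  have hD : ∀ j ω, D j (π j ω) = - D j ω := fun j ω => by simp only [D, hπ j ω]; ring
  calc lam * ∑ ω, T ω ^ (2 * k + 2) = ∑ j, ∑ ω, D j ω * T ω ^ (2 * k + 1) := by
        rw [sum_comm, mul_sum]
        refine sum_congr rfl fun ω _ => ?_
        rw [← sum_mul, hT]
        ring
    _ = ∑ j, (∑ ω, D j ω * (T ω ^ (2 * k + 1) - T (π j ω) ^ (2 * k + 1))) / 2 := by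
        refine sum_congr rfl fun j _ => ?_
        rw [← (hπ j).two_mul_sum_sub_mul T (fun ω => T ω ^ (2 * k + 1))]
        ring
    _ ≤ ∑ j, (∑ ω, (2 * k + 1) * (D j ω ^ 2 * (T ω ^ (2 * k) + T (π j ω) ^ (2 * k)))) / 2 := by
        gcongr ∑ j, ?_ / 2 with j
        exact sum_le_sum fun ω _ => sub_mul_pow_sub_pow_le _ _ k
    _ = ∑ j, ∑ ω, (2 * k + 1) * (D j ω ^ 2 * T ω ^ (2 * k)) := by
        refine sum_congr rfl fun j _ => ?_
        have hreindex : ∑ ω, D j ω ^ 2 * T (π j ω) ^ (2 * k) = ∑ ω, D j ω ^ 2 * T ω ^ (2 * k) := by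
          rw [← (hπ j).sum_comp]
          simp only [hD, hπ j _, neg_sq]
        simp only [mul_add, sum_add_distrib, ← mul_sum, hreindex]
        ring
    _ = (2 * k + 1) * ∑ ω, (∑ j, D j ω ^ 2) * T ω ^ (2 * k) := by
        rw [sum_comm, mul_sum]
        simp only [mul_sum, sum_mul]
    _ ≤ (2 * k + 1) * ∑ ω, M * T ω ^ (2 * k) := by
        gcongr with ω
        · exact (even_two_mul k).pow_nonneg _
        · exact hM ω
    _ = (2 * k + 1) * M * ∑ ω, T ω ^ (2 * k) := by simp only [mul_sum, mul_assoc]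

theorem expect_pow_le_of_sum_sub_eq_mul [Nonempty Ω] {M : ℝ} (hlam : 0 < lam)
    (hM : ∀ ω, ∑ j, (T ω - T (π j ω)) ^ 2 ≤ M) (k : ℕ) :
    𝔼 ω, T ω ^ (2 * k) ≤ (2 * k * (M / lam)) ^ k := by
  have hM0 : 0 ≤ M := (sum_nonneg fun j _ => sq_nonneg _).trans (hM (Classical.arbitrary Ω))
  refine le_pow_of_le_odd_mul (m := fun k => 𝔼 ω, T ω ^ (2 * k)) (by positivity) (by simp)
    (fun k => ?_) k
  simp only [Fintype.expect_eq_sum_div_card, mul_add_one]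
  calc (∑ ω, T ω ^ (2 * k + 2)) / Fintype.card Ω
      = lam * (∑ ω, T ω ^ (2 * k + 2)) / (lam * Fintype.card Ω) := by field_simp
    _ ≤ (2 * k + 1) * M * (∑ ω, T ω ^ (2 * k)) / (lam * Fintype.card Ω) := by
        gcongr ?_ / _
        exact mul_sum_pow_add_two_le π hπ hT hM k
    _ = _ := by field_simp

end Exchangeable

theorem sum_sum_sub_mul_sub {ι : Type*} [Fintype ι] (x y : ι → ℝ) :
    ∑ i, ∑ j, (x i - x j) * (y i - y j) =
      2 * Fintype.card ι * ∑ i, x i * y i - 2 * (∑ i, x i) * ∑ i, y i := by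
  have h (i j : ι) :
      (x i - x j) * (y i - y j) = x i * y i + x j * y j - x i * y j - x j * y i := by
    ring
  simp only [h, sum_add_distrib, sum_sub_distrib, sum_const, card_univ, nsmul_eq_mul, ← mul_sum,
    ← sum_mul]
  ring

theorem abs_sub_le_two_mul_norm {ι : Type*} [Fintype ι] (f : ι → ℝ) (i j : ι) :
    |f i - f j| ≤ 2 * ‖f‖ := by
  have hi := norm_le_pi_norm f i
  have hj := norm_le_pi_norm f j
  rw [Real.norm_eq_abs] at hi hj
  linarith [abs_sub (f i) (f j)]

theorem Equiv.Perm.mul_swap_involutive {ι : Type*} [DecidableEq ι] (i j : ι) :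
    Function.Involutive fun σ : Equiv.Perm ι => σ * Equiv.swap i j :=
  fun σ => by simp only [mul_assoc, Equiv.swap_mul_self, mul_one]

section Permutation

variable {ι : Type*} [Fintype ι] (a b : ι → ℝ)

def permSum (σ : Equiv.Perm ι) : ℝ := ∑ i, a (σ i) * b i

noncomputable def permSumMean : ℝ := (∑ i, a i) * (∑ i, b i) / Fintype.card ι

variable [DecidableEq ι]

theorem permSum_sub_permSum_mul_swap (σ : Equiv.Perm ι) (i j : ι) :
    permSum a b σ - permSum a b (σ * Equiv.swap i j) = (a (σ i) - a (σ j)) * (b i - b j) := by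
  have hswap : permSum a b (σ * Equiv.swap i j) = ∑ l, a (σ l) * b (Equiv.swap i j l) := by
    rw [permSum, ← Equiv.sum_comp (Equiv.swap i j)]
    simp only [Equiv.Perm.mul_apply, Equiv.swap_apply_self]
  rw [hswap, permSum, ← sum_sub_distrib]
  rcases eq_or_ne i j with rfl | hij
  · simp
  · rw [Fintype.sum_eq_add i j hij fun l hl => by
      rw [Equiv.swap_apply_of_ne_of_ne hl.1 hl.2, sub_self]]
    simp only [Equiv.swap_apply_left, Equiv.swap_apply_right]
    ring

theorem sum_permSum_sub_permSum_mul_swap (σ : Equiv.Perm ι) :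
    ∑ ij : ι × ι, (permSum a b σ - permSum a b (σ * Equiv.swap ij.1 ij.2)) =
      2 * Fintype.card ι * permSum a b σ - 2 * (∑ i, a i) * ∑ i, b i := by
  simp_rw [permSum_sub_permSum_mul_swap, Fintype.sum_prod_type, sum_sum_sub_mul_sub,
    Equiv.sum_comp σ a, permSum]

theorem sum_sq_permSum_sub_permSum_mul_swap_le (σ : Equiv.Perm ι) :
    ∑ ij : ι × ι, (permSum a b σ - permSum a b (σ * Equiv.swap ij.1 ij.2)) ^ 2 ≤
      Fintype.card ι ^ 2 * (16 * ‖a‖ ^ 2 * ‖b‖ ^ 2) := by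
  have hterm (ij : ι × ι) :
      (permSum a b σ - permSum a b (σ * Equiv.swap ij.1 ij.2)) ^ 2 ≤ 16 * ‖a‖ ^ 2 * ‖b‖ ^ 2 := by
    rw [permSum_sub_permSum_mul_swap, ← sq_abs, abs_mul]
    calc (|a (σ ij.1) - a (σ ij.2)| * |b ij.1 - b ij.2|) ^ 2 ≤ (2 * ‖a‖ * (2 * ‖b‖)) ^ 2 := by
          gcongr <;> exact abs_sub_le_two_mul_norm _ _ _
      _ = 16 * ‖a‖ ^ 2 * ‖b‖ ^ 2 := by ring
  calc _ ≤ ∑ _ij : ι × ι, 16 * ‖a‖ ^ 2 * ‖b‖ ^ 2 := sum_le_sum fun ij _ => hterm ij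
    _ = _ := by simp [Fintype.card_prod, sq]

variable [Nonempty ι]

theorem sum_sub_permSumMean_sub_mul_swap (σ : Equiv.Perm ι) :
    ∑ ij : ι × ι, ((permSum a b σ - permSumMean a b) -
        (permSum a b (σ * Equiv.swap ij.1 ij.2) - permSumMean a b)) =
      2 * Fintype.card ι * (permSum a b σ - permSumMean a b) := by
  simp only [sub_sub_sub_cancel_right, sum_permSum_sub_permSum_mul_swap, permSumMean]
  field_simp

theorem expect_permSum : 𝔼 σ, permSum a b σ = permSumMean a b := by
  have h := sum_eq_zero_of_sum_sub_eq_mul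
    (fun (ij : ι × ι) (σ : Equiv.Perm ι) => σ * Equiv.swap ij.1 ij.2)
    (fun ij => Equiv.Perm.mul_swap_involutive ij.1 ij.2)
    (sum_sub_permSumMean_sub_mul_swap a b) (by positivity)
  rw [sum_sub_distrib, sub_eq_zero] at h
  rw [Fintype.expect_eq_sum_div_card, h]
  simp

theorem expect_permSum_sub_permSumMean_pow_le (k : ℕ) :
    𝔼 σ, (permSum a b σ - permSumMean a b) ^ (2 * k) ≤
      (2 * k * (8 * Fintype.card ι * ‖a‖ ^ 2 * ‖b‖ ^ 2)) ^ k := by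
  have h := expect_pow_le_of_sum_sub_eq_mul
    (fun (ij : ι × ι) (σ : Equiv.Perm ι) => σ * Equiv.swap ij.1 ij.2)
    (fun ij => Equiv.Perm.mul_swap_involutive ij.1 ij.2) (sum_sub_permSumMean_sub_mul_swap a b)
    (by positivity) (fun σ => by simpa only [sub_sub_sub_cancel_right]
      using sum_sq_permSum_sub_permSum_mul_swap_le a b σ) k
  convert h using 4
  field_simp
  ring

theorem expect_abs_permSum_sub_permSumMean_rpow_rpow_le {p : ℝ} (hp : 2 ≤ p) :
    (𝔼 σ, |permSum a b σ - permSumMean a b| ^ p) ^ (1 / p) ≤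
      4 * √p * √(Fintype.card ι) * ‖a‖ * ‖b‖ := by
  refine (expect_abs_rpow_rpow_le_sqrt (by positivity)
    (expect_permSum_sub_permSumMean_pow_le a b) hp).trans_eq ?_
  rw [show 2 * p * (8 * Fintype.card ι * ‖a‖ ^ 2 * ‖b‖ ^ 2) =
    (4 * ‖a‖ * ‖b‖) ^ 2 * (p * Fintype.card ι) by ring, Real.sqrt_mul' _ (by positivity),
    Real.sqrt_sq (by positivity), Real.sqrt_mul (by linarith)]
  ring

end Permutation

theorem EPi_eq_expect (N : ℕ) (g : Equiv.Perm (Fin N) → ℝ) : EPi N g = 𝔼 σ, g σ :=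
  (Fintype.expect_eq_sum_div_card g).symm

theorem stmt18 (N : ℕ) (hN : 0 < N) (a b : Fin N → ℝ) (p : ℝ) (hp : 2 ≤ p) :
    (EPi N fun σ => |∑ i, a (σ i) * b i| ^ p) ^ (1 / p) ≤
        EPi N (fun σ => |∑ i, a (σ i) * b i|) + 4 * Real.sqrt p * Real.sqrt N * ‖a‖ * ‖b‖ ∧
      EPi N (fun σ => |∑ i, a (σ i) * b i|) + 4 * Real.sqrt p * Real.sqrt N * ‖a‖ * ‖b‖ ≤
        Real.sqrt (EPi N fun σ => |∑ i, a (σ i) * b i| ^ 2) +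
          4 * Real.sqrt p * Real.sqrt N * ‖a‖ * ‖b‖ := by
  have : Nonempty (Fin N) := ⟨⟨0, hN⟩⟩
  have hcentered := expect_abs_permSum_sub_permSumMean_rpow_rpow_le a b hp
  rw [← expect_permSum, Fintype.card_fin] at hcentered
  simp only [EPi_eq_expect]
  exact ⟨expect_abs_rpow_rpow_le_expect_abs_add (by linarith) _ hcentered,
    by gcongr; exact expect_abs_le_sqrt_expect_sq _⟩
end
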